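/- Let F : (0,∞) → ℝ^N be differentiable with 0 < F_i(t) < 1/α for all i and t, solving the spatially homogeneous system F′(t) = Q^α(F(t)). Then (i) for every collision invariant φ ∈ ℝ^N the moment t ↦ ⟨φ, F(t)⟩ is constant, and (ii) the H-functional H[F](t) = Σ_{i=1}^N μ(F_i(t)) is differentiable with d/dt H[F](t) = ⟨log(F(t)/Ψ_α(F(t))), Q^α(F(t))⟩ ≤ 0, so H[F] is non-increasing. -/

import Mathlib

open Real Finset Filter Set

noncomputable def Psi (α y : ℝ) : ℝ :=
  (1 - α * y) ^ α * (1 + (1 - α) * y) ^ (1 - α)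

noncomputable def Qop {N : ℕ} (α : ℝ) (Γ : Fin N → Fin N → Fin N → Fin N → ℝ)
    (F : Fin N → ℝ) : Fin N → ℝ := fun i =>
  ∑ j, ∑ k, ∑ l, Γ i j k l *
    (F k * F l * Psi α (F i) * Psi α (F j) - F i * F j * Psi α (F k) * Psi α (F l))

def dotN {N : ℕ} (u v : Fin N → ℝ) : ℝ := ∑ i, u i * v i

def GammaOK {N d : ℕ} (p : Fin N → Fin d → ℝ)
    (Γ : Fin N → Fin N → Fin N → Fin N → ℝ) : Prop :=
  (∀ i j k l, 0 ≤ Γ i j k l) ∧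
  (∀ i j k l, Γ i j k l = Γ j i k l) ∧
  (∀ i j k l, Γ i j k l = Γ k l i j) ∧
  (∀ i j k l, Γ i j k l ≠ 0 →
    (∀ m, p i m + p j m = p k m + p l m) ∧
    (∑ m, (p i m) ^ 2) + (∑ m, (p j m) ^ 2) = (∑ m, (p k m) ^ 2) + (∑ m, (p l m) ^ 2))

def IsCollInv {N : ℕ} (Γ : Fin N → Fin N → Fin N → Fin N → ℝ) (φ : Fin N → ℝ) : Prop :=
  ∀ i j k l, Γ i j k l ≠ 0 → φ i + φ j = φ k + φ l

def IsNormal {N d : ℕ} (p : Fin N → Fin d → ℝ)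
    (Γ : Fin N → Fin N → Fin N → Fin N → ℝ) : Prop :=
  ∀ φ : Fin N → ℝ, IsCollInv Γ φ →
    ∃ (a c : ℝ) (b : Fin d → ℝ), ∀ i, φ i = a + (∑ m, b m * p i m) + c * ∑ m, (p i m) ^ 2

def IsEquilib {N d : ℕ} (α : ℝ) (p : Fin N → Fin d → ℝ) (P : Fin N → ℝ) : Prop :=
  (∀ i, 0 < P i ∧ P i < 1 / α) ∧
  ∃ (K : ℝ) (b : Fin d → ℝ) (c : ℝ), 0 < K ∧
    ∀ i, P i / Psi α (P i) = K * Real.exp (-(∑ m, b m * p i m) - c * ∑ m, (p i m) ^ 2)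

noncomputable def muF (α y : ℝ) : ℝ :=
  y * Real.log y + (1 - α * y) * Real.log (1 - α * y)
    - (1 + (1 - α) * y) * Real.log (1 + (1 - α) * y)

noncomputable def Rfun {N : ℕ} (α : ℝ) (P : Fin N → ℝ) (i : Fin N) : ℝ :=
  P i * (1 - α * P i) * (1 + (1 - α) * P i)

noncomputable def Pcoef {N : ℕ} (α : ℝ) (P : Fin N → ℝ) (i j k l : Fin N) : ℝ :=
  P i * P j * Psi α (P k) * Psi α (P l) / Real.sqrt (Rfun α P i)

noncomputable def Lop {N : ℕ} (α : ℝ) (Γ : Fin N → Fin N → Fin N → Fin N → ℝ)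
    (P : Fin N → ℝ) (f : Fin N → ℝ) : Fin N → ℝ := fun i =>
  ∑ j, ∑ k, ∑ l, Γ i j k l / Real.sqrt (Rfun α P i) *
    (Pcoef α P i j k l * f i + Pcoef α P j i k l * f j
      - Pcoef α P k l i j * f k - Pcoef α P l k i j * f l)

/-!
Both parts come from the weak form of the collision operator: by the symmetries of `Γ`,
`4 ⟨φ, Q(F)⟩ = ∑ Γ_{ij}^{kl} (F_k F_l Ψ_i Ψ_j - F_i F_j Ψ_k Ψ_l) (φ_i + φ_j - φ_k - φ_l)`.
For a collision invariant every term vanishes. Since `μ' = log (y / Ψ(y))`, the derivative of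
`H` is this pairing with `φ = log (F / Ψ(F))`, and then the two factors of each term have opposite
signs because `log` is increasing.
-/

section Symmetrization

variable {ι R : Type*} [Fintype ι]

lemma sum_sum_sum_sum_swap_pairs [AddCommMonoid R] (f : ι → ι → ι → ι → R) :
    ∑ i, ∑ j, ∑ k, ∑ l, f i j k l = ∑ i, ∑ j, ∑ k, ∑ l, f k l i j := by
  calc ∑ i, ∑ j, ∑ k, ∑ l, f i j k l = ∑ x : ι × ι, ∑ y : ι × ι, f x.1 x.2 y.1 y.2 := by
        simp only [Fintype.sum_prod_type]
    _ = ∑ y : ι × ι, ∑ x : ι × ι, f x.1 x.2 y.1 y.2 := Finset.sum_comm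
    _ = ∑ i, ∑ j, ∑ k, ∑ l, f k l i j := by simp only [Fintype.sum_prod_type]

lemma four_mul_sum_eq_sum_symmetrized [CommRing R] (Γ D : ι → ι → ι → ι → R) (φ : ι → R)
    (hΓ₁ : ∀ i j k l, Γ i j k l = Γ j i k l) (hΓ₂ : ∀ i j k l, Γ i j k l = Γ k l i j)
    (hD₁ : ∀ i j k l, D i j k l = D j i k l) (hD₂ : ∀ i j k l, D i j k l = -D k l i j) :
    4 * ∑ i, ∑ j, ∑ k, ∑ l, Γ i j k l * D i j k l * φ i =
      ∑ i, ∑ j, ∑ k, ∑ l, Γ i j k l * D i j k l * (φ i + φ j - φ k - φ l) := by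
  set S := ∑ i, ∑ j, ∑ k, ∑ l, Γ i j k l * D i j k l * φ i
  have hj : ∑ i, ∑ j, ∑ k, ∑ l, Γ i j k l * D i j k l * φ j = S := by
    rw [Finset.sum_comm]
    refine Finset.sum_congr rfl fun i _ => Finset.sum_congr rfl fun j _ => ?_
    simp only [hΓ₁ j i, hD₁ j i]
  have hk : ∑ i, ∑ j, ∑ k, ∑ l, Γ i j k l * D i j k l * φ k = -S := by
    have e : ∀ i j k l, Γ k l i j * D k l i j * φ i = -(Γ i j k l * D i j k l * φ i) :=
      fun i j k l => by rw [hΓ₂ k l i j, hD₂ k l i j]; ring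
    rw [sum_sum_sum_sum_swap_pairs]
    simp only [e, Finset.sum_neg_distrib, S]
  have hl : ∑ i, ∑ j, ∑ k, ∑ l, Γ i j k l * D i j k l * φ l = -S := by
    have e : ∀ i j k l, Γ k l i j * D k l i j * φ j = -(Γ i j k l * D i j k l * φ j) :=
      fun i j k l => by rw [hΓ₂ k l i j, hD₂ k l i j]; ring
    rw [sum_sum_sum_sum_swap_pairs]
    simp only [e, Finset.sum_neg_distrib, hj]
  simp only [mul_add, mul_sub, Finset.sum_add_distrib, Finset.sum_sub_distrib, hj, hk, hl]
  ring

end Symmetrization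

section CollisionOperator

variable {N : ℕ} {Γ : Fin N → Fin N → Fin N → Fin N → ℝ}

lemma four_mul_dotN_Qop (α : ℝ) (hΓ₁ : ∀ i j k l, Γ i j k l = Γ j i k l)
    (hΓ₂ : ∀ i j k l, Γ i j k l = Γ k l i j) (φ P : Fin N → ℝ) :
    4 * dotN φ (Qop α Γ P) = ∑ i, ∑ j, ∑ k, ∑ l, Γ i j k l *
      (P k * P l * Psi α (P i) * Psi α (P j) - P i * P j * Psi α (P k) * Psi α (P l)) *
      (φ i + φ j - φ k - φ l) := by
  rw [← four_mul_sum_eq_sum_symmetrized Γ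
    (fun i j k l => P k * P l * Psi α (P i) * Psi α (P j) - P i * P j * Psi α (P k) * Psi α (P l))
    φ hΓ₁ hΓ₂ (fun _ _ _ _ => by ring) (fun _ _ _ _ => by ring)]
  simp only [dotN, Qop, Finset.mul_sum]
  congr! 5
  ring

lemma dotN_Qop_eq_zero_of_isCollInv (α : ℝ) (hΓ₁ : ∀ i j k l, Γ i j k l = Γ j i k l)
    (hΓ₂ : ∀ i j k l, Γ i j k l = Γ k l i j) {φ : Fin N → ℝ} (hφ : IsCollInv Γ φ)
    (P : Fin N → ℝ) : dotN φ (Qop α Γ P) = 0 := by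
  suffices 4 * dotN φ (Qop α Γ P) = 0 by linarith
  rw [four_mul_dotN_Qop α hΓ₁ hΓ₂]
  refine Finset.sum_eq_zero fun i _ => Finset.sum_eq_zero fun j _ =>
    Finset.sum_eq_zero fun k _ => Finset.sum_eq_zero fun l _ => ?_
  by_cases hΓ : Γ i j k l = 0
  · simp only [hΓ, zero_mul]
  · rw [show φ i + φ j - φ k - φ l = 0 by linarith [hφ i j k l hΓ], mul_zero]

lemma sub_mul_log_sub_log_nonpos {u v : ℝ} (hu : 0 < u) (hv : 0 < v) :
    (v - u) * (log u - log v) ≤ 0 := by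
  rcases le_total u v with h | h
  · exact mul_nonpos_of_nonneg_of_nonpos (by linarith) (by linarith [log_le_log hu h])
  · exact mul_nonpos_of_nonpos_of_nonneg (by linarith) (by linarith [log_le_log hv h])

lemma gain_sub_loss_mul_log_nonpos {a b c d wa wb wc wd : ℝ} (ha : 0 < a) (hb : 0 < b)
    (hc : 0 < c) (hd : 0 < d) (hwa : 0 < wa) (hwb : 0 < wb) (hwc : 0 < wc) (hwd : 0 < wd) :
    (c * d * wa * wb - a * b * wc * wd) *
      (log (a / wa) + log (b / wb) - log (c / wc) - log (d / wd)) ≤ 0 := by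
  have hprod : c * d * wa * wb - a * b * wc * wd =
      wa * wb * wc * wd * (c / wc * (d / wd) - a / wa * (b / wb)) := by
    field_simp
  have hlog : log (a / wa) + log (b / wb) - log (c / wc) - log (d / wd) =
      log (a / wa * (b / wb)) - log (c / wc * (d / wd)) := by
    rw [log_mul (by positivity) (by positivity), log_mul (by positivity) (by positivity)]
    ring
  rw [hprod, hlog, mul_assoc]
  exact mul_nonpos_of_nonneg_of_nonpos (by positivity)
    (sub_mul_log_sub_log_nonpos (by positivity) (by positivity))

lemma dotN_log_div_Psi_Qop_nonpos {α : ℝ} (hΓ₀ : ∀ i j k l, 0 ≤ Γ i j k l)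
    (hΓ₁ : ∀ i j k l, Γ i j k l = Γ j i k l) (hΓ₂ : ∀ i j k l, Γ i j k l = Γ k l i j)
    {P : Fin N → ℝ} (hP : ∀ i, 0 < P i) (hΨ : ∀ i, 0 < Psi α (P i)) :
    dotN (fun i => log (P i / Psi α (P i))) (Qop α Γ P) ≤ 0 := by
  suffices 4 * dotN (fun i => log (P i / Psi α (P i))) (Qop α Γ P) ≤ 0 by linarith
  rw [four_mul_dotN_Qop α hΓ₁ hΓ₂]
  refine Finset.sum_nonpos fun i _ => Finset.sum_nonpos fun j _ =>
    Finset.sum_nonpos fun k _ => Finset.sum_nonpos fun l _ => ?_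
  rw [mul_assoc]
  exact mul_nonpos_of_nonneg_of_nonpos (hΓ₀ i j k l)
    (gain_sub_loss_mul_log_nonpos (hP i) (hP j) (hP k) (hP l) (hΨ i) (hΨ j) (hΨ k) (hΨ l))

end CollisionOperator

section Entropy

variable {α y : ℝ}

lemma one_sub_mul_pos_and_one_add_mul_pos (hy : 0 < y) (hy' : y < 1 / α) :
    0 < 1 - α * y ∧ 0 < 1 + (1 - α) * y := by
  have : y * α < 1 := (lt_div_iff₀ (one_div_pos.1 (hy.trans hy'))).1 hy'
  constructor <;> nlinarith

lemma Psi_pos (h₁ : 0 < 1 - α * y) (h₂ : 0 < 1 + (1 - α) * y) : 0 < Psi α y :=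
  mul_pos (rpow_pos_of_pos h₁ _) (rpow_pos_of_pos h₂ _)

lemma log_div_Psi (hy : 0 < y) (h₁ : 0 < 1 - α * y) (h₂ : 0 < 1 + (1 - α) * y) :
    log (y / Psi α y) = log y - α * log (1 - α * y) - (1 - α) * log (1 + (1 - α) * y) := by
  rw [log_div hy.ne' (Psi_pos h₁ h₂).ne', Psi,
    log_mul (rpow_pos_of_pos h₁ _).ne' (rpow_pos_of_pos h₂ _).ne', log_rpow h₁, log_rpow h₂]
  ring

lemma hasDerivAt_muF (hy : 0 < y) (h₁ : 0 < 1 - α * y) (h₂ : 0 < 1 + (1 - α) * y) :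
    HasDerivAt (muF α) (log (y / Psi α y)) y := by
  have d₁ : HasDerivAt (fun y => 1 - α * y) (-α) y := by
    simpa using ((hasDerivAt_id y).const_mul α).const_sub 1
  have d₂ : HasDerivAt (fun y => 1 + (1 - α) * y) (1 - α) y := by
    simpa using ((hasDerivAt_id y).const_mul (1 - α)).const_add 1
  have := ((hasDerivAt_mul_log hy.ne').fun_add ((hasDerivAt_mul_log h₁.ne').comp y d₁)).fun_sub
    ((hasDerivAt_mul_log h₂.ne').comp y d₂)
  rw [log_div_Psi hy h₁ h₂]
  exact this.congr_deriv (by ring)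

end Entropy

lemma hasDerivAt_dotN {N : ℕ} {F : ℝ → Fin N → ℝ} {F' : Fin N → ℝ} {t : ℝ}
    (hF : ∀ i, HasDerivAt (fun s => F s i) (F' i) t) (φ : Fin N → ℝ) :
    HasDerivAt (fun s => dotN φ (F s)) (dotN φ F') t :=
  HasDerivAt.fun_sum fun i _ => (hF i).const_mul (φ i)

lemma antitoneOn_of_hasDerivAt_nonpos {D : Set ℝ} (hD : Convex ℝ D)
    {f f' : ℝ → ℝ} (hf : ∀ x ∈ D, HasDerivAt f (f' x) x) (hf' : ∀ x ∈ D, f' x ≤ 0) :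
    AntitoneOn f D :=
  antitoneOn_of_hasDerivWithinAt_nonpos hD
    (fun x hx => (hf x hx).continuousAt.continuousWithinAt)
    (fun x hx => (hf x (interior_subset hx)).hasDerivWithinAt)
    (fun x hx => hf' x (interior_subset hx))

theorem stmt14_general {N d : ℕ}
    (α : ℝ)
    (p : Fin N → Fin d → ℝ) (Γ : Fin N → Fin N → Fin N → Fin N → ℝ)
    (hΓ : GammaOK p Γ)
    (F F' : ℝ → Fin N → ℝ)
    (hpos : ∀ t ∈ Set.Ioi (0 : ℝ), ∀ i, 0 < F t i ∧ F t i < 1 / α)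
    (hdiff : ∀ t ∈ Set.Ioi (0 : ℝ), ∀ i, HasDerivAt (fun s => F s i) (F' t i) t)
    (heq : ∀ t ∈ Set.Ioi (0 : ℝ), ∀ i, F' t i = Qop α Γ (F t) i) :
    (∀ φ : Fin N → ℝ, IsCollInv Γ φ → ∀ t ∈ Set.Ioi (0 : ℝ), ∀ s ∈ Set.Ioi (0 : ℝ),
      dotN φ (F t) = dotN φ (F s)) ∧
    (∀ t ∈ Set.Ioi (0 : ℝ),
      HasDerivAt (fun s => ∑ i, muF α (F s i))
        (dotN (fun i => Real.log (F t i / Psi α (F t i))) (Qop α Γ (F t))) t ∧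
      dotN (fun i => Real.log (F t i / Psi α (F t i))) (Qop α Γ (F t)) ≤ 0) ∧
    AntitoneOn (fun t => ∑ i, muF α (F t i)) (Set.Ioi 0) := by
  obtain ⟨hΓ₀, hΓ₁, hΓ₂, -⟩ := hΓ
  have hF' : ∀ t ∈ Ioi (0 : ℝ), F' t = Qop α Γ (F t) := fun t ht => funext (heq t ht)
  have hbounds : ∀ t ∈ Ioi (0 : ℝ), ∀ i, 0 < 1 - α * F t i ∧ 0 < 1 + (1 - α) * F t i :=
    fun t ht i => one_sub_mul_pos_and_one_add_mul_pos (hpos t ht i).1 (hpos t ht i).2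
  have hmoment : ∀ φ, IsCollInv Γ φ → ∀ t ∈ Ioi (0 : ℝ),
      HasDerivAt (fun s => dotN φ (F s)) 0 t := fun φ hφ t ht => by
    simpa only [hF' t ht, dotN_Qop_eq_zero_of_isCollInv α hΓ₁ hΓ₂ hφ] using
      hasDerivAt_dotN (hdiff t ht) φ
  have hH : ∀ t ∈ Ioi (0 : ℝ), HasDerivAt (fun s => ∑ i, muF α (F s i))
      (dotN (fun i => log (F t i / Psi α (F t i))) (Qop α Γ (F t))) t := fun t ht => by
    rw [← hF' t ht]
    refine HasDerivAt.fun_sum fun i _ => ?_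
    exact (hasDerivAt_muF (hpos t ht i).1 (hbounds t ht i).1 (hbounds t ht i).2).comp t
      (hdiff t ht i)
  have hdissip : ∀ t ∈ Ioi (0 : ℝ),
      dotN (fun i => log (F t i / Psi α (F t i))) (Qop α Γ (F t)) ≤ 0 := fun t ht =>
    dotN_log_div_Psi_Qop_nonpos hΓ₀ hΓ₁ hΓ₂ (fun i => (hpos t ht i).1)
      fun i => Psi_pos (hbounds t ht i).1 (hbounds t ht i).2
  refine ⟨fun φ hφ t ht s hs => ?_, fun t ht => ⟨hH t ht, hdissip t ht⟩,
    antitoneOn_of_hasDerivAt_nonpos (convex_Ioi 0) hH hdissip⟩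
  exact isOpen_Ioi.is_const_of_deriv_eq_zero isPreconnected_Ioi
    (fun x hx => (hmoment φ hφ x hx).differentiableAt.differentiableWithinAt)
    (fun x hx => (hmoment φ hφ x hx).deriv) ht hs

/-- conservation of moments and monotonicity of the H-functional for
the spatially homogeneous system. -/
theorem stmt14 {N d : ℕ} (hN : 0 < N) (hd : 0 < d)
    (α : ℝ) (hα0 : 0 < α) (hα1 : α < 1)
    (p : Fin N → Fin d → ℝ) (Γ : Fin N → Fin N → Fin N → Fin N → ℝ)
    (hΓ : GammaOK p Γ)
    (F F' : ℝ → Fin N → ℝ)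
    (hpos : ∀ t ∈ Set.Ioi (0 : ℝ), ∀ i, 0 < F t i ∧ F t i < 1 / α)
    (hdiff : ∀ t ∈ Set.Ioi (0 : ℝ), ∀ i, HasDerivAt (fun s => F s i) (F' t i) t)
    (heq : ∀ t ∈ Set.Ioi (0 : ℝ), ∀ i, F' t i = Qop α Γ (F t) i) :
    (∀ φ : Fin N → ℝ, IsCollInv Γ φ → ∀ t ∈ Set.Ioi (0 : ℝ), ∀ s ∈ Set.Ioi (0 : ℝ),
      dotN φ (F t) = dotN φ (F s)) ∧
    (∀ t ∈ Set.Ioi (0 : ℝ),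
      HasDerivAt (fun s => ∑ i, muF α (F s i))
        (dotN (fun i => Real.log (F t i / Psi α (F t i))) (Qop α Γ (F t))) t ∧
      dotN (fun i => Real.log (F t i / Psi α (F t i))) (Qop α Γ (F t)) ≤ 0) ∧
    AntitoneOn (fun t => ∑ i, muF α (F t i)) (Set.Ioi 0) :=
  stmt14_general α p Γ hΓ F F' hpos hdiff heq
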